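/- Let R be an alternative ring, n an element of the nucleus, and w, x, y, z in R. Then [w,n]*([w,n]*(x,y,z)) = 0, where [a,b] = a*b - b*a and (x,y,z) is the associator. -/

import Mathlib

/-!
Alternativity makes the associator alternating, so left-nuclear elements are nuclear and can be
moved in and out of associators (Teichmüller identity, `associator_cocycle`). For nuclear `n`,
`D x = x * n - n * x` is a derivation with nuclear values, whence
`D w * (x, y, z) = -(D x * (w, y, z))`; in particular `D w * (w, y, z) = -(D y * (w, w, z)) = 0`.
Nuclear elements commute in their action on associators, hence
`D w * (D w * (x, y, z)) = -(D x * (D w * (w, y, z))) = 0`.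
-/

def leftNucleus (R : Type*) [NonUnitalNonAssocRing R] : Set R :=
  {v | ∀ x y : R, associator v x y = 0}

section

variable {R : Type*} [NonUnitalNonAssocRing R]

theorem associator_add_left (a b y z : R) :
    associator (a + b) y z = associator a y z + associator b y z := by
  simp only [associator, add_mul]
  abel

theorem associator_sub_left (a b y z : R) :
    associator (a - b) y z = associator a y z - associator b y z := by
  simp only [associator, sub_mul]
  abel

theorem associator_swap_left (hl : ∀ x y : R, associator x x y = 0) (x y z : R) :
    associator y x z = -associator x y z := by
  linear_combination (norm := (simp only [associator, add_mul, mul_add]; abel))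
    hl (x + y) z - hl x z - hl y z

theorem associator_swap_right (hr : ∀ x y : R, associator y x x = 0) (x y z : R) :
    associator x z y = -associator x y z := by
  linear_combination (norm := (simp only [associator, add_mul, mul_add]; abel))
    hr (y + z) x - hr y x - hr z x

namespace leftNucleus

variable {n u v : R}

theorem associator_left_eq_zero (hv : v ∈ leftNucleus R) (x y : R) : associator v x y = 0 :=
  hv x y

theorem associator_mul_left (hv : v ∈ leftNucleus R) (x y z : R) :
    associator (v * x) y z = v * associator x y z := by
  have h := associator_cocycle v x y z
  simp only [associator_left_eq_zero hv, zero_mul, add_zero, sub_zero, sub_eq_zero] at h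
  exact h.symm

theorem associator_mid_eq_zero (hl : ∀ x y : R, associator x x y = 0)
    (hv : v ∈ leftNucleus R) (x y : R) : associator x v y = 0 := by
  rw [associator_swap_left hl, associator_left_eq_zero hv, neg_zero]

theorem associator_right_eq_zero (hl : ∀ x y : R, associator x x y = 0)
    (hr : ∀ x y : R, associator y x x = 0) (hv : v ∈ leftNucleus R) (x y : R) :
    associator x y v = 0 := by
  rw [← neg_neg (associator x y v), ← associator_swap_right hr, associator_mid_eq_zero hl hv,
    neg_zero]

theorem associator_mul_right (hl : ∀ x y : R, associator x x y = 0)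
    (hv : v ∈ leftNucleus R) (x y z : R) :
    associator (x * v) y z = v * associator x y z := by
  have hvy : associator (x * v) y z = associator x (v * y) z := by
    have h := associator_cocycle x v y z
    simp only [associator_left_eq_zero hv, associator_mid_eq_zero hl hv, zero_mul, mul_zero,
      zero_sub, sub_zero, add_zero, neg_add_eq_zero] at h
    exact h
  rw [hvy, associator_swap_left hl, associator_mul_left hv, associator_swap_left hl x y, mul_neg,
    neg_neg]

theorem mul_mem (hu : u ∈ leftNucleus R) (hv : v ∈ leftNucleus R) : u * v ∈ leftNucleus R := by
  intro x y
  have h := associator_cocycle u v x y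
  simpa [associator_left_eq_zero hu, associator_left_eq_zero hv] using h

theorem mul_mul_associator_comm (hl : ∀ x y : R, associator x x y = 0)
    (hu : u ∈ leftNucleus R) (hv : v ∈ leftNucleus R) (x y z : R) :
    u * (v * associator x y z) = v * (u * associator x y z) := by
  have huv : x * (u * v) = x * u * v := (sub_eq_zero.1 (associator_mid_eq_zero hl hu x v)).symm
  calc u * (v * associator x y z) = u * v * associator x y z :=
        (sub_eq_zero.1 (hu v (associator x y z))).symm
    _ = v * (u * associator x y z) := by
        rw [← associator_mul_right hl (mul_mem hu hv), huv, associator_mul_right hl hv,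
          associator_mul_right hl hu]

theorem commutator_mem (hl : ∀ x y : R, associator x x y = 0) (hn : n ∈ leftNucleus R) (x : R) :
    x * n - n * x ∈ leftNucleus R := by
  intro y z
  rw [associator_sub_left, associator_mul_right hl hn, associator_mul_left hn, sub_self]

theorem commutator_mul (hl : ∀ x y : R, associator x x y = 0)
    (hr : ∀ x y : R, associator y x x = 0) (hn : n ∈ leftNucleus R) (x y : R) :
    x * y * n - n * (x * y) = (x * n - n * x) * y + x * (y * n - n * y) := by
  have hxyn := associator_right_eq_zero hl hr hn x y
  have hnxy := associator_left_eq_zero hn x y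
  have hxny := associator_mid_eq_zero hl hn x y
  rw [associator_apply, sub_eq_zero] at hxyn hnxy hxny
  rw [sub_mul, mul_sub, hxyn, hnxy, hxny]
  abel

theorem commutator_mul_associator_swap (hl : ∀ x y : R, associator x x y = 0)
    (hr : ∀ x y : R, associator y x x = 0) (hn : n ∈ leftNucleus R) (w x y z : R) :
    (w * n - n * w) * associator x y z = -((x * n - n * x) * associator w y z) := by
  rw [← associator_mul_right hl (commutator_mem hl hn w),
    ← associator_mul_left (commutator_mem hl hn x)]
  refine eq_neg_of_add_eq_zero_left ?_
  rw [← associator_add_left, add_comm, ← commutator_mul hl hr hn,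
    associator_left_eq_zero (commutator_mem hl hn (x * w))]

theorem commutator_mul_associator_self (hl : ∀ x y : R, associator x x y = 0)
    (hr : ∀ x y : R, associator y x x = 0) (hn : n ∈ leftNucleus R) (w y z : R) :
    (w * n - n * w) * associator w y z = 0 := by
  rw [← neg_neg (associator w y z), ← associator_swap_left hl, mul_neg,
    commutator_mul_associator_swap hl hr hn, hl, mul_zero, neg_zero, neg_zero]

end leftNucleus

end

theorem stmt_10 {R : Type*} [NonUnitalNonAssocRing R]
    (hl : ∀ x y : R, (x*x)*y = x*(x*y))
    (hr : ∀ x y : R, (y*x)*x = y*(x*x))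
    (n : R) (hn : ∀ x y : R, (n*x)*y = n*(x*y)) :
    ∀ w x y z : R,
      (w*n - n*w)*((w*n - n*w)*((x*y)*z - x*(y*z))) = 0 := by
  intro w x y z
  have hl' : ∀ x y : R, associator x x y = 0 := fun x y ↦ sub_eq_zero.2 (hl x y)
  have hr' : ∀ x y : R, associator y x x = 0 := fun x y ↦ sub_eq_zero.2 (hr x y)
  have hn' : n ∈ leftNucleus R := fun x y ↦ sub_eq_zero.2 (hn x y)
  have hDw := leftNucleus.commutator_mem hl' hn' w
  have hDx := leftNucleus.commutator_mem hl' hn' x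
  change (w * n - n * w) * ((w * n - n * w) * associator x y z) = 0
  calc (w * n - n * w) * ((w * n - n * w) * associator x y z)
      = -((w * n - n * w) * ((x * n - n * x) * associator w y z)) := by
        rw [leftNucleus.commutator_mul_associator_swap hl' hr' hn' w x, mul_neg]
    _ = -((x * n - n * x) * ((w * n - n * w) * associator w y z)) := by
        rw [leftNucleus.mul_mul_associator_comm hl' hDw hDx]
    _ = 0 := by
        rw [leftNucleus.commutator_mul_associator_self hl' hr' hn', mul_zero, neg_zero]
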